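/- arXiv:2410.17978 — 3 statements merged into one kernel-verified Lean document; each statement's English description precedes it below -/
import Mathlib

section
/- Let d ≥ 3, t ≥ 1, and m > d. For h : ℝ^d × ℝ^d → ℝ with ⟨x⟩^m h ∈ L^∞ and ∇_v h ∈ L^∞, let ρ_h(x,t) = ∫ h²(x - tw, w) dw and φ_h = G_d * ρ_h. Then ‖∇_x φ_h(·,t)‖_{L^∞} ≤ C t^{-d-1} ‖⟨x⟩^m h‖_{L^∞_{x,v}} ‖∇_v h‖_{L^∞_{x,v}}. -/
open MeasureTheory Real
open scoped ENNReal NNReal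

/-- The Bessel (screened Coulomb) kernel, Green function of `1-Δ` on `ℝ^d`. -/
noncomputable def besselKernel (d : ℕ) (x : Fin d → ℝ) : ℝ :=
  (4 * π) ^ (-(d : ℝ) / 2) *
    ∫ R in Set.Ioi (0 : ℝ),
      Real.exp (-(∑ i, x i ^ 2) / (4 * R)) * Real.exp (-R) * R ^ (-(d : ℝ) / 2)

lemma bessel_nonneg (d : ℕ) (x : Fin d → ℝ) : 0 ≤ besselKernel d x := by
  apply mul_nonneg (Real.rpow_nonneg (by positivity) _)
  apply setIntegral_nonneg measurableSet_Ioi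
  intro R hR
  have hR' : (0:ℝ) < R := hR
  exact mul_nonneg (mul_nonneg (Real.exp_nonneg _) (Real.exp_nonneg _))
    (Real.rpow_nonneg hR'.le _)

lemma bessel_integrable (d : ℕ) : Integrable (besselKernel d) := by
  have hc : (0:ℝ) ≤ (4 * π) ^ (-(d : ℝ) / 2) := Real.rpow_nonneg (by positivity) _
  set F : ((Fin d → ℝ) × ℝ) → ℝ := fun p =>
    Real.exp (-(∑ i, p.1 i ^ 2) / (4 * p.2)) * Real.exp (-p.2) * p.2 ^ (-(d : ℝ) / 2)
    with hFdef
  have hFm : Measurable F := by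
    apply Measurable.mul
    · apply Measurable.mul
      · apply Real.measurable_exp.comp
        apply Measurable.div
        · fun_prop
        · fun_prop
      · fun_prop
    · exact (measurable_snd.pow_const _)
  -- measurability of the kernel
  have hGm : StronglyMeasurable fun x : Fin d → ℝ => ∫ R in Set.Ioi (0:ℝ), F (x, R) :=
    hFm.stronglyMeasurable.integral_prod_right'
  have hkm : AEStronglyMeasurable (besselKernel d) volume := by
    have : besselKernel d = fun x =>
        (4 * π) ^ (-(d : ℝ) / 2) * ∫ R in Set.Ioi (0:ℝ), F (x, R) := rfl
    rw [this]
    exact (stronglyMeasurable_const.mul hGm).aestronglyMeasurable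
  -- nonnegativity of the inner integral
  have hFnn : ∀ x : Fin d → ℝ, ∀ R ∈ Set.Ioi (0:ℝ), 0 ≤ F (x, R) := by
    intro x R hR
    have hR' : (0:ℝ) < R := hR
    exact mul_nonneg (mul_nonneg (Real.exp_nonneg _) (Real.exp_nonneg _))
      (Real.rpow_nonneg hR'.le _)
  have hinn_nn : ∀ x : Fin d → ℝ, (0:ℝ) ≤ ∫ R in Set.Ioi (0:ℝ), F (x, R) :=
    fun x => setIntegral_nonneg measurableSet_Ioi (hFnn x)
  refine ⟨hkm, ?_⟩
  -- pointwise bound by iterated lintegral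
  have key : ∀ x : Fin d → ℝ, (‖besselKernel d x‖₊ : ℝ≥0∞)
      ≤ ENNReal.ofReal ((4 * π) ^ (-(d : ℝ) / 2))
        * ∫⁻ R in Set.Ioi (0:ℝ), ENNReal.ofReal (F (x, R)) := by
    intro x
    have h1 : (‖besselKernel d x‖₊ : ℝ≥0∞)
        = ENNReal.ofReal ((4 * π) ^ (-(d : ℝ) / 2) * ∫ R in Set.Ioi (0:ℝ), F (x, R)) :=
      Real.enorm_eq_ofReal (mul_nonneg hc (hinn_nn x))
    rw [h1, ENNReal.ofReal_mul hc]
    refine mul_le_mul_right ?_ _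
    have hnn : 0 ≤ᵐ[volume.restrict (Set.Ioi (0:ℝ))] fun R => F (x, R) :=
      (ae_restrict_iff' measurableSet_Ioi).2 (Filter.Eventually.of_forall (hFnn x))
    have hms : AEStronglyMeasurable (fun R => F (x, R))
        (volume.restrict (Set.Ioi (0:ℝ))) :=
      (hFm.comp measurable_prodMk_left).aestronglyMeasurable
    rw [integral_eq_lintegral_of_nonneg_ae hnn hms]
    exact ENNReal.ofReal_toReal_le
  -- compute the (x)-lintegral of the Gaussian factor for fixed R > 0
  have hinner : ∀ R ∈ Set.Ioi (0:ℝ),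
      (∫⁻ x : Fin d → ℝ, ENNReal.ofReal (F (x, R)))
        = ENNReal.ofReal ((4 * π) ^ ((d : ℝ) / 2) * Real.exp (-R)) := by
    intro R hR
    have hR' : (0:ℝ) < R := hR
    have hb : (0:ℝ) < (4 * R)⁻¹ := by positivity
    have hexp : ∀ x : Fin d → ℝ,
        Real.exp (-(∑ i, x i ^ 2) / (4 * R)) = ∏ i, Real.exp (-(4 * R)⁻¹ * x i ^ 2) := by
      intro x
      rw [← Real.exp_sum]
      congr 1
      rw [neg_div, div_eq_inv_mul, Finset.mul_sum, ← Finset.sum_neg_distrib]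
      exact Finset.sum_congr rfl fun i _ => by ring
    have hcoef : (0:ℝ) ≤ Real.exp (-R) * R ^ (-(d : ℝ) / 2) :=
      mul_nonneg (Real.exp_nonneg _) (Real.rpow_nonneg hR'.le _)
    have hFsplit : ∀ x : Fin d → ℝ, F (x, R)
        = (Real.exp (-R) * R ^ (-(d : ℝ) / 2)) * ∏ i, Real.exp (-(4 * R)⁻¹ * x i ^ 2) := by
      intro x
      rw [hFdef]
      simp only
      rw [hexp x]
      ring
    have hgint : Integrable (fun x : Fin d → ℝ => ∏ i, Real.exp (-(4 * R)⁻¹ * x i ^ 2)) :=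
      Integrable.fintype_prod fun _ => integrable_exp_neg_mul_sq hb
    calc (∫⁻ x : Fin d → ℝ, ENNReal.ofReal (F (x, R)))
        = ∫⁻ x : Fin d → ℝ, ENNReal.ofReal (Real.exp (-R) * R ^ (-(d : ℝ) / 2))
            * ENNReal.ofReal (∏ i, Real.exp (-(4 * R)⁻¹ * x i ^ 2)) := by
          refine lintegral_congr fun x => ?_
          rw [hFsplit x, ENNReal.ofReal_mul hcoef]
      _ = ENNReal.ofReal (Real.exp (-R) * R ^ (-(d : ℝ) / 2))
            * ∫⁻ x : Fin d → ℝ, ENNReal.ofReal (∏ i, Real.exp (-(4 * R)⁻¹ * x i ^ 2)) :=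
          lintegral_const_mul' _ _ ENNReal.ofReal_ne_top
      _ = ENNReal.ofReal (Real.exp (-R) * R ^ (-(d : ℝ) / 2))
            * ENNReal.ofReal (∫ x : Fin d → ℝ, ∏ i, Real.exp (-(4 * R)⁻¹ * x i ^ 2)) := by
          rw [← ofReal_integral_eq_lintegral_ofReal hgint (Filter.Eventually.of_forall
            fun x => Finset.prod_nonneg fun i _ => Real.exp_nonneg _)]
      _ = ENNReal.ofReal ((4 * π) ^ ((d : ℝ) / 2) * Real.exp (-R)) := by
          rw [MeasureTheory.volume_pi, MeasureTheory.integral_fintype_prod_eq_pow (ι := Fin d)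
            (f := fun u : ℝ => Real.exp (-(4 * R)⁻¹ * u ^ 2)), integral_gaussian,
            ← ENNReal.ofReal_mul hcoef]
          congr 1
          have h1 : π / (4 * R)⁻¹ = (4 * π) * R := by field_simp
          rw [Fintype.card_fin, h1, Real.sqrt_eq_rpow,
            ← Real.rpow_natCast (((4 * π) * R) ^ ((1:ℝ)/2)) d,
            ← Real.rpow_mul (by positivity),
            Real.mul_rpow (by positivity) hR'.le]
          have h2 : (1:ℝ)/2 * (d:ℕ) = (d:ℝ)/2 := by push_cast; ring
          rw [h2]
          have hRR : R ^ (-(d : ℝ) / 2) * R ^ ((d:ℝ) / 2) = 1 := by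
            rw [← Real.rpow_add hR', show -(d:ℝ) / 2 + (d:ℝ) / 2 = 0 by ring,
              Real.rpow_zero]
          calc Real.exp (-R) * R ^ (-(d : ℝ) / 2)
              * ((4 * π) ^ ((d:ℝ)/2) * R ^ ((d:ℝ)/2))
              = (4 * π) ^ ((d:ℝ)/2) * Real.exp (-R)
                * (R ^ (-(d : ℝ) / 2) * R ^ ((d:ℝ)/2)) := by ring
            _ = (4 * π) ^ ((d : ℝ) / 2) * Real.exp (-R) := by rw [hRR, mul_one]
  -- integrability of the exponential majorant in R
  have hexpint : Integrable (fun R : ℝ => (4 * π) ^ ((d : ℝ) / 2) * Real.exp (-R))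
      (volume.restrict (Set.Ioi (0:ℝ))) := by
    have := (exp_neg_integrableOn_Ioi 0 (b := 1) one_pos).const_mul ((4 * π) ^ ((d : ℝ) / 2))
    simpa using this
  -- finish
  have hmeas2 : AEMeasurable (Function.uncurry fun (x : Fin d → ℝ) (R : ℝ) =>
      ENNReal.ofReal (F (x, R)))
      ((volume : Measure (Fin d → ℝ)).prod (volume.restrict (Set.Ioi (0:ℝ)))) :=
    (ENNReal.measurable_ofReal.comp hFm).aemeasurable
  rw [HasFiniteIntegral]
  calc (∫⁻ x : Fin d → ℝ, ‖besselKernel d x‖₊)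
      ≤ ∫⁻ x : Fin d → ℝ, ENNReal.ofReal ((4 * π) ^ (-(d : ℝ) / 2))
          * ∫⁻ R in Set.Ioi (0:ℝ), ENNReal.ofReal (F (x, R)) := lintegral_mono key
    _ = ENNReal.ofReal ((4 * π) ^ (-(d : ℝ) / 2))
          * ∫⁻ x : Fin d → ℝ, ∫⁻ R in Set.Ioi (0:ℝ), ENNReal.ofReal (F (x, R)) :=
        lintegral_const_mul' _ _ ENNReal.ofReal_ne_top
    _ = ENNReal.ofReal ((4 * π) ^ (-(d : ℝ) / 2))
          * ∫⁻ R in Set.Ioi (0:ℝ), ∫⁻ x : Fin d → ℝ, ENNReal.ofReal (F (x, R)) := by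
        rw [lintegral_lintegral_swap hmeas2]
    _ = ENNReal.ofReal ((4 * π) ^ (-(d : ℝ) / 2))
          * ∫⁻ R in Set.Ioi (0:ℝ), ENNReal.ofReal ((4 * π) ^ ((d : ℝ) / 2) * Real.exp (-R)) := by
        congr 1
        refine setLIntegral_congr_fun measurableSet_Ioi
          (fun R hR => hinner R hR)
    _ = ENNReal.ofReal ((4 * π) ^ (-(d : ℝ) / 2))
          * ENNReal.ofReal (∫ R in Set.Ioi (0:ℝ), (4 * π) ^ ((d : ℝ) / 2) * Real.exp (-R)) := by
        rw [← ofReal_integral_eq_lintegral_ofReal hexpint ((ae_restrict_iff'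
          measurableSet_Ioi).2 (Filter.Eventually.of_forall fun R _ => by positivity))]
    _ < ⊤ := ENNReal.mul_lt_top ENNReal.ofReal_lt_top ENNReal.ofReal_lt_top

/-- If `ρ` is bounded and Lipschitz, then the gradient of `besselKernel ⋆ ρ` is bounded by
`‖besselKernel‖₁` times the Lipschitz constant of `ρ`. -/
lemma conv_lipschitz (d : ℕ) (ρ : (Fin d → ℝ) → ℝ) (M c₀ : ℝ) (hc₀ : 0 ≤ c₀)
    (hM : ∀ y, |ρ y| ≤ M) (hlip : ∀ a b, |ρ a - ρ b| ≤ c₀ * ‖a - b‖) (x : Fin d → ℝ) :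
    ‖fderiv ℝ (fun x' : Fin d → ℝ => ∫ y : Fin d → ℝ, besselKernel d (x' - y) * ρ y) x‖
      ≤ (∫ z : Fin d → ℝ, besselKernel d z) * c₀ := by
  set B := ∫ z : Fin d → ℝ, besselKernel d z with hB
  have hBnn : 0 ≤ B := integral_nonneg fun z => bessel_nonneg d z
  have hρcont : Continuous ρ := by
    refine (LipschitzWith.of_dist_le_mul (K := c₀.toNNReal) (f := ρ) fun a b => ?_).continuous
    rw [Real.dist_eq, dist_eq_norm]
    exact (hlip a b).trans
      (mul_le_mul_of_nonneg_right (Real.le_coe_toNNReal c₀) (norm_nonneg _))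
  have hGint := bessel_integrable d
  have hFint : ∀ x' : Fin d → ℝ, Integrable (fun z => ρ (x' - z) * besselKernel d z) :=
    fun x' => hGint.bdd_mul
      ((hρcont.comp (continuous_const.sub continuous_id)).aestronglyMeasurable)
      (c := M) (Filter.Eventually.of_forall fun z => by simpa [Real.norm_eq_abs] using hM (x' - z))
  have hFrw : ∀ x' : Fin d → ℝ, (∫ y : Fin d → ℝ, besselKernel d (x' - y) * ρ y)
      = ∫ z : Fin d → ℝ, ρ (x' - z) * besselKernel d z := by
    intro x'
    rw [← integral_sub_left_eq_self (fun z => ρ (x' - z) * besselKernel d z) volume x']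
    simp only [sub_sub_cancel]
    refine integral_congr_ae (Filter.Eventually.of_forall fun y => ?_)
    ring
  have hF_lip : ∀ x₁ x₂ : Fin d → ℝ,
      |(∫ y : Fin d → ℝ, besselKernel d (x₁ - y) * ρ y)
        - ∫ y : Fin d → ℝ, besselKernel d (x₂ - y) * ρ y| ≤ (B * c₀) * ‖x₁ - x₂‖ := by
    intro x₁ x₂
    rw [hFrw x₁, hFrw x₂, ← integral_sub (hFint x₁) (hFint x₂)]
    have hptw : ∀ z, |ρ (x₁ - z) * besselKernel d z - ρ (x₂ - z) * besselKernel d z|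
        ≤ (c₀ * ‖x₁ - x₂‖) * besselKernel d z := by
      intro z
      rw [← sub_mul, abs_mul, abs_of_nonneg (bessel_nonneg d z)]
      refine mul_le_mul_of_nonneg_right ?_ (bessel_nonneg d z)
      have := hlip (x₁ - z) (x₂ - z)
      rwa [sub_sub_sub_cancel_right] at this
    calc |∫ z : Fin d → ℝ, (ρ (x₁ - z) * besselKernel d z - ρ (x₂ - z) * besselKernel d z)|
        ≤ ∫ z : Fin d → ℝ, |ρ (x₁ - z) * besselKernel d z - ρ (x₂ - z) * besselKernel d z| := by
          simpa [Real.norm_eq_abs] using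
            norm_integral_le_integral_norm
              (fun z : Fin d → ℝ => ρ (x₁ - z) * besselKernel d z
                - ρ (x₂ - z) * besselKernel d z)
      _ ≤ ∫ z : Fin d → ℝ, (c₀ * ‖x₁ - x₂‖) * besselKernel d z := by
          refine integral_mono ((hFint x₁).sub (hFint x₂)).abs (hGint.const_mul _)
            fun z => hptw z
      _ = (c₀ * ‖x₁ - x₂‖) * B := by rw [integral_const_mul]
      _ = (B * c₀) * ‖x₁ - x₂‖ := by ring
  have hlipF : LipschitzWith (Real.toNNReal (B * c₀))
      (fun x' : Fin d → ℝ => ∫ y : Fin d → ℝ, besselKernel d (x' - y) * ρ y) := by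
    refine LipschitzWith.of_dist_le_mul fun a b => ?_
    rw [Real.dist_eq, dist_eq_norm]
    exact (hF_lip a b).trans
      (mul_le_mul_of_nonneg_right (Real.le_coe_toNNReal _) (norm_nonneg _))
  have := norm_fderiv_le_of_lipschitz ℝ hlipF (x₀ := x)
  rwa [Real.coe_toNNReal _ (mul_nonneg hBnn hc₀)] at this

lemma normsq_le_sum (d : ℕ) (z : Fin d → ℝ) : ‖z‖ ^ 2 ≤ ∑ i, z i ^ 2 := by
  have hs : (0:ℝ) ≤ ∑ i, z i ^ 2 := by positivity
  have h1 : ‖z‖ ≤ Real.sqrt (∑ i, z i ^ 2) := by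
    rw [pi_norm_le_iff_of_nonneg (Real.sqrt_nonneg _)]
    intro i
    rw [Real.norm_eq_abs]
    exact Real.abs_le_sqrt (Finset.single_le_sum (fun j _ => sq_nonneg (z j))
      (Finset.mem_univ i))
  calc ‖z‖ ^ 2 ≤ Real.sqrt (∑ i, z i ^ 2) ^ 2 :=
        pow_le_pow_left₀ (norm_nonneg _) h1 2
    _ = ∑ i, z i ^ 2 := Real.sq_sqrt hs

lemma g_integrable (d : ℕ) {m : ℝ} (hm : (d : ℝ) < m) :
    Integrable (fun z : Fin d → ℝ => (1 + ∑ i, z i ^ 2) ^ (-(m / 2))) := by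
  have h0 : (0:ℝ) ≤ m := le_trans (Nat.cast_nonneg d) hm.le
  have hfin : ((Module.finrank ℝ (Fin d → ℝ)) : ℝ) < m := by
    rwa [Module.finrank_fin_fun]
  have hbase := integrable_rpow_neg_one_add_norm_sq (μ := (volume : Measure (Fin d → ℝ)))
    (r := m) hfin
  refine hbase.mono' ?_ (Filter.Eventually.of_forall fun z => ?_)
  · apply Continuous.aestronglyMeasurable
    apply Continuous.rpow_const
    · continuity
    · intro z
      left
      positivity
  · have h1 : (0:ℝ) < 1 + ‖z‖ ^ 2 := by positivity
    have h2 : 1 + ‖z‖ ^ 2 ≤ 1 + ∑ i, z i ^ 2 := by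
      have := normsq_le_sum d z; linarith
    have h3 : (1 + ∑ i, z i ^ 2 : ℝ) ^ (-(m / 2)) ≤ (1 + ‖z‖ ^ 2) ^ (-(m / 2)) :=
      Real.rpow_le_rpow_of_nonpos h1 h2 (by linarith)
    have h4 : (0:ℝ) ≤ (1 + ∑ i, z i ^ 2 : ℝ) ^ (-(m / 2)) :=
      Real.rpow_nonneg (by positivity) _
    rw [Real.norm_eq_abs, abs_of_nonneg h4, neg_div]
    exact h3

/-- Improved linear decay in `d ≥ 3`: if `⟨x⟩^m h ∈ L^∞` for some `m > d` and
`∇_v h ∈ L^∞`, then `‖∇_x φ_h(t)‖_{L^∞} ≤ C t^{-d-1} ‖⟨x⟩^m h‖_∞ ‖∇_v h‖_∞` for `t ≥ 1`. -/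
theorem field_decay_improved_dim_ge_three (d : ℕ) (hd : 3 ≤ d) (m : ℝ) (hm : (d : ℝ) < m) :
    ∃ C > 0, ∀ h : (Fin d → ℝ) → (Fin d → ℝ) → ℝ,
      ContDiff ℝ 1 (fun p : (Fin d → ℝ) × (Fin d → ℝ) => h p.1 p.2) →
      ∀ K : ℝ, (∀ x v, (1 + ∑ i, x i ^ 2) ^ (m / 2) * |h x v| ≤ K) →
      ∀ L : ℝ, (∀ x v, ‖fderiv ℝ (fun v' => h x v') v‖ ≤ L) →
      ∀ t : ℝ, 1 ≤ t → ∀ x : Fin d → ℝ,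
        ‖fderiv ℝ (fun x' : Fin d → ℝ =>
            ∫ y : Fin d → ℝ, besselKernel d (x' - y) *
              ∫ w : Fin d → ℝ, (h (y - t • w) w) ^ 2) x‖
          ≤ C * t ^ (-(d : ℝ) - 1) * K * L := by
  classical
  set g : (Fin d → ℝ) → ℝ := fun z => (1 + ∑ i, z i ^ 2) ^ (-(m / 2)) with hgdef
  have hg_int : Integrable g := g_integrable d hm
  have hm0 : (0:ℝ) ≤ m := le_trans (Nat.cast_nonneg d) hm.le
  have hg_nn : ∀ z, 0 ≤ g z := fun z => Real.rpow_nonneg (by positivity) _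
  have hg_le_one : ∀ z, g z ≤ 1 := by
    intro z
    have h1 : (1:ℝ) ≤ 1 + ∑ i, z i ^ 2 := by
      have : (0:ℝ) ≤ ∑ i, z i ^ 2 := by positivity
      linarith
    exact Real.rpow_le_one_of_one_le_of_nonpos h1 (by linarith)
  set Iₘ := ∫ z : Fin d → ℝ, g z with hIm
  have hIm_nn : 0 ≤ Iₘ := integral_nonneg hg_nn
  set B := ∫ z : Fin d → ℝ, besselKernel d z with hB
  have hB_nn : 0 ≤ B := integral_nonneg (bessel_nonneg d)
  have hCpos : (0:ℝ) < 2 * B * Iₘ + 1 := by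
    have h1 : (0:ℝ) ≤ 2 * B * Iₘ :=
      mul_nonneg (mul_nonneg (by norm_num) hB_nn) hIm_nn
    linarith
  refine ⟨2 * B * Iₘ + 1, hCpos, ?_⟩
  intro h hC1 K hK L hL t ht x
  have ht0 : (0:ℝ) < t := lt_of_lt_of_le one_pos ht
  have hK0 : 0 ≤ K := le_trans (by positivity) (hK 0 0)
  have hL0 : 0 ≤ L := le_trans (norm_nonneg _) (hL 0 0)
  -- pointwise decay of h
  have hhb : ∀ z v, |h z v| ≤ K * g z := by
    intro z v
    have hP : (0:ℝ) < 1 + ∑ i, z i ^ 2 := by positivity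
    have h2 : (0:ℝ) < (1 + ∑ i, z i ^ 2) ^ (m / 2) := Real.rpow_pos_of_pos hP _
    have hgz : g z = ((1 + ∑ i, z i ^ 2) ^ (m / 2))⁻¹ := by
      simp only [hgdef]
      rw [Real.rpow_neg hP.le]
    have heq : |h z v| = ((1 + ∑ i, z i ^ 2) ^ (m / 2) * |h z v|)
        * ((1 + ∑ i, z i ^ 2) ^ (m / 2))⁻¹ := by
      field_simp
    rw [heq, hgz]
    exact mul_le_mul_of_nonneg_right (hK z v) (inv_nonneg.2 h2.le)
  -- square bound
  have hsq : ∀ z v, h z v ^ 2 ≤ K ^ 2 * g z := by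
    intro z v
    have h1 := hhb z v
    have h2 := hg_nn z
    have h3 := hg_le_one z
    calc h z v ^ 2 = |h z v| ^ 2 := (sq_abs _).symm
      _ ≤ (K * g z) ^ 2 := pow_le_pow_left₀ (abs_nonneg _) h1 2
      _ = K ^ 2 * g z * g z := by ring
      _ ≤ K ^ 2 * g z * 1 :=
        mul_le_mul_of_nonneg_left h3 (mul_nonneg (sq_nonneg K) h2)
      _ = K ^ 2 * g z := mul_one _
  -- Lipschitz continuity in `v`
  have hmv : ∀ z v v', |h z v' - h z v| ≤ L * ‖v' - v‖ := by
    intro z v v'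
    have hdiff : ∀ u : Fin d → ℝ, DifferentiableAt ℝ (fun v'' => h z v'') u := by
      intro u
      have h1 : DifferentiableAt ℝ (fun p : (Fin d → ℝ) × (Fin d → ℝ) => h p.1 p.2) (z, u) :=
        (hC1.differentiable one_ne_zero) (z, u)
      have h2 : DifferentiableAt ℝ
          (fun v'' : Fin d → ℝ => ((z, v'') : (Fin d → ℝ) × (Fin d → ℝ))) u :=
        (differentiableAt_const z).prodMk differentiableAt_id
      exact h1.comp u h2
    have := Convex.norm_image_sub_le_of_norm_fderiv_le (𝕜 := ℝ)
      (f := fun v'' => h z v'') (fun u _ => hdiff u) (fun u _ => hL z u) convex_univ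
      (Set.mem_univ v) (Set.mem_univ v')
    simpa [Real.norm_eq_abs] using this
  -- integrability of the scaled translate of `g`
  have hg_comp : ∀ y : Fin d → ℝ, Integrable (fun w : Fin d → ℝ => g (y - t • w)) := by
    intro y
    have h1 : Integrable (fun u : Fin d → ℝ => g (y - u)) := hg_int.comp_sub_left y
    exact (integrable_comp_smul_iff volume (fun u : Fin d → ℝ => g (y - u)) ht0.ne').2 h1
  have hg_val : ∀ y : Fin d → ℝ, (∫ w : Fin d → ℝ, g (y - t • w)) = (t ^ d)⁻¹ * Iₘ := by
    intro y
    have h1 := MeasureTheory.Measure.integral_comp_smul (volume : Measure (Fin d → ℝ))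
      (fun u : Fin d → ℝ => g (y - u)) t
    rw [integral_sub_left_eq_self g volume y, Module.finrank_fin_fun,
      abs_of_nonneg (inv_nonneg.2 (pow_nonneg ht0.le d)), smul_eq_mul] at h1
    exact h1
  -- integrability of the `ρ`-integrand
  have hconth : Continuous (fun p : (Fin d → ℝ) × (Fin d → ℝ) => h p.1 p.2) := hC1.continuous
  have hA : ∀ y : Fin d → ℝ, Integrable (fun w : Fin d → ℝ => h (y - t • w) w ^ 2) := by
    intro y
    refine ((hg_comp y).const_mul (K ^ 2)).mono' ?_ (Filter.Eventually.of_forall fun w => ?_)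
    · have hcw : Continuous fun w : Fin d → ℝ => h (y - t • w) w :=
        hconth.comp ((continuous_const.sub (continuous_id.const_smul t)).prodMk continuous_id)
      exact (hcw.pow 2).aestronglyMeasurable
    · rw [Real.norm_eq_abs, abs_of_nonneg (sq_nonneg _)]
      exact hsq _ _
  -- boundedness of ρ
  have hρ_nn : ∀ y : Fin d → ℝ, 0 ≤ ∫ w : Fin d → ℝ, h (y - t • w) w ^ 2 :=
    fun y => integral_nonneg fun w => sq_nonneg _
  have htd1 : (t ^ d)⁻¹ ≤ 1 := by
    have h1 : (1:ℝ) ≤ t ^ d := one_le_pow₀ ht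
    exact inv_le_one_of_one_le₀ h1
  have hρ_bd : ∀ y : Fin d → ℝ, |∫ w : Fin d → ℝ, h (y - t • w) w ^ 2| ≤ K ^ 2 * Iₘ := by
    intro y
    rw [abs_of_nonneg (hρ_nn y)]
    have h1 : (∫ w : Fin d → ℝ, h (y - t • w) w ^ 2)
        ≤ ∫ w : Fin d → ℝ, K ^ 2 * g (y - t • w) :=
      integral_mono (hA y) ((hg_comp y).const_mul _) fun w => hsq _ _
    rw [integral_const_mul, hg_val y] at h1
    have h2 : K ^ 2 * ((t ^ d)⁻¹ * Iₘ) ≤ K ^ 2 * Iₘ := by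
      have h3 : (t ^ d)⁻¹ * Iₘ ≤ Iₘ := by
        calc (t ^ d)⁻¹ * Iₘ ≤ 1 * Iₘ := mul_le_mul_of_nonneg_right htd1 hIm_nn
          _ = Iₘ := one_mul _
      exact mul_le_mul_of_nonneg_left h3 (sq_nonneg K)
    exact h1.trans h2
  -- Lipschitz estimate for ρ
  have hρ_lip : ∀ x₁ x₂ : Fin d → ℝ,
      |(∫ w : Fin d → ℝ, h (x₁ - t • w) w ^ 2) - ∫ w : Fin d → ℝ, h (x₂ - t • w) w ^ 2|
        ≤ (2 * K * L * Iₘ * ((t ^ d)⁻¹ * t⁻¹)) * ‖x₁ - x₂‖ := by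
    intro x₁ x₂
    set δ : Fin d → ℝ := t⁻¹ • (x₁ - x₂) with hδdef
    have hδnorm : ‖δ‖ = t⁻¹ * ‖x₁ - x₂‖ := by
      rw [hδdef, norm_smul, Real.norm_eq_abs, abs_of_nonneg (inv_nonneg.2 ht0.le)]
    have hδw : ∀ w : Fin d → ℝ, x₁ - t • (w + δ) = x₂ - t • w := by
      intro w
      rw [hδdef, smul_add, smul_smul, mul_inv_cancel₀ ht0.ne', one_smul]
      abel
    have h1 : (∫ w : Fin d → ℝ, h (x₁ - t • w) w ^ 2)
        = ∫ w : Fin d → ℝ, h (x₂ - t • w) (w + δ) ^ 2 := by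
      rw [← integral_add_right_eq_self (μ := (volume : Measure (Fin d → ℝ)))
        (fun w : Fin d → ℝ => h (x₁ - t • w) w ^ 2) δ]
      refine integral_congr_ae (Filter.Eventually.of_forall fun w => ?_)
      simp only [hδw]
    have hInt1 : Integrable (fun w : Fin d → ℝ => h (x₂ - t • w) (w + δ) ^ 2) := by
      have h2 := (hA x₁).comp_add_right δ
      refine h2.congr (Filter.Eventually.of_forall fun w => ?_)
      simp only [hδw]
    have h2 : (∫ w : Fin d → ℝ, h (x₁ - t • w) w ^ 2)
          - (∫ w : Fin d → ℝ, h (x₂ - t • w) w ^ 2)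
        = ∫ w : Fin d → ℝ, (h (x₂ - t • w) (w + δ) ^ 2 - h (x₂ - t • w) w ^ 2) := by
      rw [h1, integral_sub hInt1 (hA x₂)]
    have hpt : ∀ w : Fin d → ℝ, |h (x₂ - t • w) (w + δ) ^ 2 - h (x₂ - t • w) w ^ 2|
        ≤ (2 * K * (L * ‖δ‖)) * g (x₂ - t • w) := by
      intro w
      have ha := hhb (x₂ - t • w) (w + δ)
      have hb := hhb (x₂ - t • w) w
      have hab : |h (x₂ - t • w) (w + δ) - h (x₂ - t • w) w| ≤ L * ‖δ‖ := by
        have := hmv (x₂ - t • w) w (w + δ)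
        simpa using this
      have hfac : h (x₂ - t • w) (w + δ) ^ 2 - h (x₂ - t • w) w ^ 2
          = (h (x₂ - t • w) (w + δ) - h (x₂ - t • w) w)
            * (h (x₂ - t • w) (w + δ) + h (x₂ - t • w) w) := by ring
      rw [hfac, abs_mul]
      have hsum : |h (x₂ - t • w) (w + δ) + h (x₂ - t • w) w|
          ≤ 2 * (K * g (x₂ - t • w)) := by
        calc |h (x₂ - t • w) (w + δ) + h (x₂ - t • w) w|
            ≤ |h (x₂ - t • w) (w + δ)| + |h (x₂ - t • w) w| := abs_add_le _ _
          _ ≤ K * g (x₂ - t • w) + K * g (x₂ - t • w) := add_le_add ha hb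
          _ = 2 * (K * g (x₂ - t • w)) := by ring
      calc |h (x₂ - t • w) (w + δ) - h (x₂ - t • w) w|
            * |h (x₂ - t • w) (w + δ) + h (x₂ - t • w) w|
          ≤ (L * ‖δ‖) * (2 * (K * g (x₂ - t • w))) :=
            mul_le_mul hab hsum (abs_nonneg _) (mul_nonneg hL0 (norm_nonneg _))
        _ = (2 * K * (L * ‖δ‖)) * g (x₂ - t • w) := by ring
    have h3 : |(∫ w : Fin d → ℝ, h (x₁ - t • w) w ^ 2)
          - ∫ w : Fin d → ℝ, h (x₂ - t • w) w ^ 2|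
        ≤ ∫ w : Fin d → ℝ, (2 * K * (L * ‖δ‖)) * g (x₂ - t • w) := by
      rw [h2]
      refine le_trans ?_ (integral_mono (hInt1.sub (hA x₂)).abs
        ((hg_comp x₂).const_mul _) fun w => hpt w)
      simpa [Real.norm_eq_abs] using norm_integral_le_integral_norm
        (fun w : Fin d → ℝ => h (x₂ - t • w) (w + δ) ^ 2 - h (x₂ - t • w) w ^ 2)
    rw [integral_const_mul, hg_val x₂, hδnorm] at h3
    calc |(∫ w : Fin d → ℝ, h (x₁ - t • w) w ^ 2)
          - ∫ w : Fin d → ℝ, h (x₂ - t • w) w ^ 2|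
        ≤ 2 * K * (L * (t⁻¹ * ‖x₁ - x₂‖)) * ((t ^ d)⁻¹ * Iₘ) := h3
      _ = (2 * K * L * Iₘ * ((t ^ d)⁻¹ * t⁻¹)) * ‖x₁ - x₂‖ := by ring
  -- apply the convolution lemma
  have hc₂nn : (0:ℝ) ≤ 2 * K * L * Iₘ * ((t ^ d)⁻¹ * t⁻¹) :=
    mul_nonneg (mul_nonneg (mul_nonneg (mul_nonneg (by norm_num) hK0) hL0) hIm_nn)
      (mul_nonneg (inv_nonneg.2 (pow_nonneg ht0.le d)) (inv_nonneg.2 ht0.le))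
  have main := conv_lipschitz d (fun y : Fin d → ℝ => ∫ w : Fin d → ℝ, h (y - t • w) w ^ 2)
    (K ^ 2 * Iₘ) (2 * K * L * Iₘ * ((t ^ d)⁻¹ * t⁻¹)) hc₂nn hρ_bd hρ_lip x
  refine le_trans main ?_
  rw [← hB]
  have hrpow : t ^ (-(d : ℝ) - 1) = (t ^ d)⁻¹ * t⁻¹ := by
    rw [show -(d:ℝ) - 1 = -((d:ℝ) + 1) by ring, Real.rpow_neg ht0.le,
      Real.rpow_add ht0, Real.rpow_natCast, Real.rpow_one, mul_inv]
  rw [hrpow]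
  have hprod_nn : (0:ℝ) ≤ ((t ^ d)⁻¹ * t⁻¹) * (K * L) :=
    mul_nonneg (mul_nonneg (inv_nonneg.2 (pow_nonneg ht0.le d)) (inv_nonneg.2 ht0.le))
      (mul_nonneg hK0 hL0)
  calc B * (2 * K * L * Iₘ * ((t ^ d)⁻¹ * t⁻¹))
      = (2 * B * Iₘ) * (((t ^ d)⁻¹ * t⁻¹) * (K * L)) := by ring
    _ ≤ (2 * B * Iₘ + 1) * (((t ^ d)⁻¹ * t⁻¹) * (K * L)) :=
        mul_le_mul_of_nonneg_right (by linarith) hprod_nn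
    _ = (2 * B * Iₘ + 1) * ((t ^ d)⁻¹ * t⁻¹) * K * L := by ring
end

section
/- Let h : ℝ × ℝ → ℝ be Schwartz and λ > 0 with Σ_n (λⁿ/n!)(‖∂_x^{n+1} h‖_{L²} + ‖∂_v^{n+1} h‖_{L²}) < ∞. Then the analytic norm of the mixed derivative satisfies Σ_{n=0}^∞ (λⁿ/n!) ‖∂_v ∂_x^n h‖_{L²_{x,v}} ≤ Σ_{n=0}^∞ (λⁿ/n!) ‖∂_x^{n+1} h‖_{L²_{x,v}} + Σ_{n=0}^∞ (λⁿ/n!) ‖∂_v^{n+1} h‖_{L²_{x,v}}. -/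
open MeasureTheory Real SchwartzMap

/-- Partial derivative in `x` for functions on `ℝ_x × ℝ_v`. -/
noncomputable def pdx1 (g : ℝ × ℝ → ℝ) : ℝ × ℝ → ℝ := fun p => fderiv ℝ g p (1, 0)

/-- Partial derivative in `v` for functions on `ℝ_x × ℝ_v`. -/
noncomputable def pdv1 (g : ℝ × ℝ → ℝ) : ℝ × ℝ → ℝ := fun p => fderiv ℝ g p (0, 1)

/-- The `L²` norm on `ℝ × ℝ`. -/
noncomputable def L2n (g : ℝ × ℝ → ℝ) : ℝ := Real.sqrt (∫ p : ℝ × ℝ, (g p) ^ 2)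

namespace AMDI
abbrev S2 := SchwartzMap (ℝ × ℝ) ℝ

noncomputable def Px : S2 →L[ℝ] S2 := LineDeriv.lineDerivOpCLM ℝ S2 ((1 : ℝ), (0 : ℝ))
noncomputable def Pv : S2 →L[ℝ] S2 := LineDeriv.lineDerivOpCLM ℝ S2 ((0 : ℝ), (1 : ℝ))

lemma coe_Px (f : S2) : ⇑(Px f) = pdx1 ⇑f := rfl
lemma coe_Pv (f : S2) : ⇑(Pv f) = pdv1 ⇑f := rfl

lemma iter_Px (n : ℕ) (f : S2) : pdx1^[n] ⇑f = ⇑(Px^[n] f) := by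
  induction n generalizing f with
  | zero => rfl
  | succ n ih =>
    rw [Function.iterate_succ_apply, Function.iterate_succ_apply, ← coe_Px f, ih (Px f)]

lemma iter_Pv (n : ℕ) (f : S2) : pdv1^[n] ⇑f = ⇑(Pv^[n] f) := by
  induction n generalizing f with
  | zero => rfl
  | succ n ih =>
    rw [Function.iterate_succ_apply, Function.iterate_succ_apply, ← coe_Pv f, ih (Pv f)]

lemma bddf {D : Type*} [NormedAddCommGroup D] [NormedSpace ℝ D] (f : 𝓢(D, ℝ)) :
    ∃ C, ∀ x, ‖f x‖ ≤ C :=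
  ⟨SchwartzMap.seminorm ℝ 0 0 f, fun x => SchwartzMap.norm_le_seminorm ℝ f x⟩

lemma intmul {D : Type*} [NormedAddCommGroup D] [NormedSpace ℝ D] [MeasurableSpace D]
    [BorelSpace D] [SecondCountableTopology D] (μ : Measure D) [μ.HasTemperateGrowth]
    (f g : 𝓢(D, ℝ)) : Integrable (fun x => f x * g x) μ :=
  (g.integrable (μ := μ)).bdd_mul f.continuous.aestronglyMeasurable
    (Filter.Eventually.of_forall (bddf f).choose_spec)

end AMDI

namespace AMDI

lemma htgX (v₀ : ℝ) : Function.HasTemperateGrowth (fun x : ℝ => ((x, v₀) : ℝ × ℝ)) := by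
  refine Function.HasTemperateGrowth.of_fderiv ?_
    (differentiable_id.prodMk (differentiable_const _)) (k := 1) (C := 1 + |v₀|) ?_
  · have : fderiv ℝ (fun x : ℝ => ((x, v₀) : ℝ × ℝ)) =
        fun _ => ContinuousLinearMap.inl ℝ ℝ ℝ := by
      funext x
      have h : HasFDerivAt (fun x : ℝ => ((x, v₀) : ℝ × ℝ))
          (ContinuousLinearMap.inl ℝ ℝ ℝ) x := by
        have := (hasFDerivAt_id (𝕜 := ℝ) x).prodMk (hasFDerivAt_const (𝕜 := ℝ) v₀ x)
        exact this
      exact h.fderiv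
    rw [this]
    exact Function.HasTemperateGrowth.const _
  · intro x
    simp only [Prod.norm_def, Real.norm_eq_abs, pow_one]
    have h1 : 0 ≤ |x| := abs_nonneg x
    have h2 : 0 ≤ |v₀| := abs_nonneg v₀
    rw [max_le_iff]
    constructor <;> nlinarith

lemma htgV (x₀ : ℝ) : Function.HasTemperateGrowth (fun v : ℝ => ((x₀, v) : ℝ × ℝ)) := by
  refine Function.HasTemperateGrowth.of_fderiv ?_
    ((differentiable_const _).prodMk differentiable_id) (k := 1) (C := 1 + |x₀|) ?_
  · have : fderiv ℝ (fun v : ℝ => ((x₀, v) : ℝ × ℝ)) =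
        fun _ => ContinuousLinearMap.inr ℝ ℝ ℝ := by
      funext x
      have h : HasFDerivAt (fun v : ℝ => ((x₀, v) : ℝ × ℝ))
          (ContinuousLinearMap.inr ℝ ℝ ℝ) x := by
        have := (hasFDerivAt_const (𝕜 := ℝ) x₀ x).prodMk (hasFDerivAt_id (𝕜 := ℝ) x)
        exact this
      exact h.fderiv
    rw [this]
    exact Function.HasTemperateGrowth.const _
  · intro x
    simp only [Prod.norm_def, Real.norm_eq_abs, pow_one]
    have h1 : 0 ≤ |x| := abs_nonneg x
    have h2 : 0 ≤ |x₀| := abs_nonneg x₀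
    rw [max_le_iff]
    constructor <;> nlinarith

noncomputable def slX (v₀ : ℝ) : S2 →L[ℝ] 𝓢(ℝ, ℝ) :=
  SchwartzMap.compCLM ℝ (g := fun x : ℝ => ((x, v₀) : ℝ × ℝ)) (htgX v₀)
    ⟨1, 1, fun x => by
      simp only [Prod.norm_def, Real.norm_eq_abs, pow_one, one_mul]
      have := le_max_left |x| |v₀|
      linarith⟩

noncomputable def slV (x₀ : ℝ) : S2 →L[ℝ] 𝓢(ℝ, ℝ) :=
  SchwartzMap.compCLM ℝ (g := fun v : ℝ => ((x₀, v) : ℝ × ℝ)) (htgV x₀)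
    ⟨1, 1, fun x => by
      simp only [Prod.norm_def, Real.norm_eq_abs, pow_one, one_mul]
      have := le_max_right |x₀| |x|
      linarith⟩

@[simp] lemma slX_apply (v₀ : ℝ) (f : S2) (x : ℝ) : slX v₀ f x = f (x, v₀) := rfl
@[simp] lemma slV_apply (x₀ : ℝ) (f : S2) (v : ℝ) : slV x₀ f v = f (x₀, v) := rfl

lemma hasDerivAt_slX (f : S2) (v₀ t : ℝ) :
    HasDerivAt (fun x => f (x, v₀)) (Px f (t, v₀)) t := by
  have h1 : HasDerivAt (fun x : ℝ => ((x, v₀) : ℝ × ℝ)) ((1 : ℝ), (0 : ℝ)) t :=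
    (hasDerivAt_id t).prodMk (hasDerivAt_const t v₀)
  exact (f.differentiableAt.hasFDerivAt).comp_hasDerivAt t h1

lemma hasDerivAt_slV (f : S2) (x₀ t : ℝ) :
    HasDerivAt (fun v => f (x₀, v)) (Pv f (x₀, t)) t := by
  have h1 : HasDerivAt (fun v : ℝ => ((x₀, v) : ℝ × ℝ)) ((0 : ℝ), (1 : ℝ)) t :=
    (hasDerivAt_const t x₀).prodMk (hasDerivAt_id t)
  exact (f.differentiableAt.hasFDerivAt).comp_hasDerivAt t h1

end AMDI

namespace AMDI

lemma intmul2 (f g : S2) : Integrable (fun p : ℝ × ℝ => f p * g p) volume :=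
  intmul volume f g

lemma intmul1 (f g : 𝓢(ℝ, ℝ)) :
    Integrable (fun x : ℝ => f x * g x) volume :=
  intmul volume f g

lemma ibp_v (f g : S2) :
    ∫ p : ℝ × ℝ, Pv f p * g p = -∫ p : ℝ × ℝ, f p * Pv g p := by
  have h1 : Integrable (fun p : ℝ × ℝ => Pv f p * g p) ((volume : Measure ℝ).prod volume) := by
    rw [← Measure.volume_eq_prod]; exact intmul2 (Pv f) g
  have h2 : Integrable (fun p : ℝ × ℝ => f p * Pv g p) ((volume : Measure ℝ).prod volume) := by
    rw [← Measure.volume_eq_prod]; exact intmul2 f (Pv g)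
  rw [show (volume : Measure (ℝ × ℝ)) = (volume : Measure ℝ).prod volume from
    Measure.volume_eq_prod ℝ ℝ]
  rw [MeasureTheory.integral_prod _ h1, MeasureTheory.integral_prod _ h2, ← integral_neg]
  refine integral_congr_ae (Filter.Eventually.of_forall fun x => ?_)
  have i1 : Integrable ((fun t => f (x, t)) * (fun t => Pv g (x, t))) volume := by
    have := intmul1 (slV x f) (slV x (Pv g)); exact this
  have i2 : Integrable ((fun t => Pv f (x, t)) * (fun t => g (x, t))) volume := by
    have := intmul1 (slV x (Pv f)) (slV x g); exact this
  have i3 : Integrable ((fun t => f (x, t)) * (fun t => g (x, t))) volume := by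
    have := intmul1 (slV x f) (slV x g); exact this
  have key := MeasureTheory.integral_mul_deriv_eq_deriv_mul_of_integrable
    (fun t _ => hasDerivAt_slV f x t) (fun t _ => hasDerivAt_slV g x t) i1 i2 i3
  show (∫ t : ℝ, Pv f (x, t) * g (x, t)) = -∫ t : ℝ, f (x, t) * Pv g (x, t)
  linarith [key]

lemma ibp_x (f g : S2) :
    ∫ p : ℝ × ℝ, Px f p * g p = -∫ p : ℝ × ℝ, f p * Px g p := by
  have h1 : Integrable (fun p : ℝ × ℝ => Px f p * g p) ((volume : Measure ℝ).prod volume) := by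
    rw [← Measure.volume_eq_prod]; exact intmul2 (Px f) g
  have h2 : Integrable (fun p : ℝ × ℝ => f p * Px g p) ((volume : Measure ℝ).prod volume) := by
    rw [← Measure.volume_eq_prod]; exact intmul2 f (Px g)
  rw [show (volume : Measure (ℝ × ℝ)) = (volume : Measure ℝ).prod volume from
    Measure.volume_eq_prod ℝ ℝ]
  rw [MeasureTheory.integral_prod_symm _ h1, MeasureTheory.integral_prod_symm _ h2,
    ← integral_neg]
  refine integral_congr_ae (Filter.Eventually.of_forall fun v => ?_)
  have i1 : Integrable ((fun t => f (t, v)) * (fun t => Px g (t, v))) volume := by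
    have := intmul1 (slX v f) (slX v (Px g)); exact this
  have i2 : Integrable ((fun t => Px f (t, v)) * (fun t => g (t, v))) volume := by
    have := intmul1 (slX v (Px f)) (slX v g); exact this
  have i3 : Integrable ((fun t => f (t, v)) * (fun t => g (t, v))) volume := by
    have := intmul1 (slX v f) (slX v g); exact this
  have key := MeasureTheory.integral_mul_deriv_eq_deriv_mul_of_integrable
    (fun t _ => hasDerivAt_slX f v t) (fun t _ => hasDerivAt_slX g v t) i1 i2 i3
  show (∫ t : ℝ, Px f (t, v) * g (t, v)) = -∫ t : ℝ, f (t, v) * Px g (t, v)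
  linarith [key]

end AMDI

namespace AMDI

lemma fderiv_apply_dir (f : S2) (m u p : ℝ × ℝ) :
    fderiv ℝ (fun q => fderiv ℝ f q m) p u = fderiv ℝ (fderiv ℝ (⇑f)) p u m := by
  have hdf : DifferentiableAt ℝ (fderiv ℝ (⇑f)) p := by
    have h2 : ContDiff ℝ 2 (⇑f) := f.smooth 2
    have := (h2.fderiv_right (m := 1) (by norm_num)).differentiable one_ne_zero
    exact this.differentiableAt
  have hcomp : (fun q => fderiv ℝ (⇑f) q m) =
      (fun L : (ℝ × ℝ) →L[ℝ] ℝ => L m) ∘ (fderiv ℝ (⇑f)) := rfl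
  rw [hcomp]
  have hL : (fun L : (ℝ × ℝ) →L[ℝ] ℝ => L m) =
      ⇑(ContinuousLinearMap.apply ℝ ℝ m) := rfl
  rw [hL, fderiv_comp p (ContinuousLinearMap.apply ℝ ℝ m).differentiableAt hdf]
  simp

lemma comm_PxPv (f : S2) : Px (Pv f) = Pv (Px f) := by
  ext p
  have hsymm : IsSymmSndFDerivAt ℝ (⇑f) p :=
    ((f.smooth 2).contDiffAt).isSymmSndFDerivAt (by simp)
  show fderiv ℝ (fun q => fderiv ℝ (⇑f) q (0, 1)) p (1, 0) =
    fderiv ℝ (fun q => fderiv ℝ (⇑f) q (1, 0)) p (0, 1)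
  rw [fderiv_apply_dir, fderiv_apply_dir]
  exact hsymm.eq _ _

lemma comm_PxPv_iter (i : ℕ) (f : S2) : Px (Pv^[i] f) = Pv^[i] (Px f) := by
  induction i generalizing f with
  | zero => rfl
  | succ i ih =>
    rw [Function.iterate_succ_apply, Function.iterate_succ_apply, ih (Pv f), comm_PxPv]

lemma L2n_nonneg (g : ℝ × ℝ → ℝ) : 0 ≤ L2n g := Real.sqrt_nonneg _

lemma L2n_sq (f : S2) : L2n ⇑f ^ 2 = ∫ p : ℝ × ℝ, (f p) ^ 2 :=
  Real.sq_sqrt (integral_nonneg fun p => sq_nonneg _)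

lemma cauchy_schwarz (f g : S2) :
    ∫ p : ℝ × ℝ, f p * g p ≤ L2n ⇑f * L2n ⇑g := by
  set A := ∫ p : ℝ × ℝ, (f p) ^ 2 with hA
  set B := ∫ p : ℝ × ℝ, (g p) ^ 2 with hB
  set C := ∫ p : ℝ × ℝ, f p * g p with hC
  have hintA : Integrable (fun p : ℝ × ℝ => f p ^ 2) volume := by
    have := intmul2 f f; simpa [sq] using this
  have hintB : Integrable (fun p : ℝ × ℝ => g p ^ 2) volume := by
    have := intmul2 g g; simpa [sq] using this
  have hintC : Integrable (fun p : ℝ × ℝ => f p * g p) volume := intmul2 f g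
  have hAnn : 0 ≤ A := integral_nonneg fun p => sq_nonneg _
  have hBnn : 0 ≤ B := integral_nonneg fun p => sq_nonneg _
  have hquad : ∀ t : ℝ, 0 ≤ B * (t * t) + (2 * C) * t + A := by
    intro t
    have hnn : 0 ≤ ∫ p : ℝ × ℝ, (f p + t * g p) ^ 2 :=
      integral_nonneg fun p => sq_nonneg _
    have hexp : (fun p : ℝ × ℝ => (f p + t * g p) ^ 2) =
        fun p => f p ^ 2 + (2 * t) * (f p * g p) + (t * t) * g p ^ 2 := by
      funext p; ring
    rw [hexp] at hnn
    have e1 := integral_add (μ := volume)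
      (f := fun p : ℝ × ℝ => f p ^ 2 + 2 * t * (f p * g p))
      (g := fun p : ℝ × ℝ => t * t * g p ^ 2)
      (hintA.add (hintC.const_mul _)) (hintB.const_mul _)
    have e2 := integral_add (μ := volume)
      (f := fun p : ℝ × ℝ => f p ^ 2)
      (g := fun p : ℝ × ℝ => 2 * t * (f p * g p))
      hintA (hintC.const_mul _)
    have e3 : ∫ p : ℝ × ℝ, 2 * t * (f p * g p) = 2 * t * C :=
      integral_const_mul _ _
    have e4 : ∫ p : ℝ × ℝ, t * t * g p ^ 2 = t * t * B :=
      integral_const_mul _ _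
    linarith [hnn, e1, e2, e3, e4]
  have hdisc := discrim_le_zero hquad
  rw [discrim] at hdisc
  have hCsq : C ^ 2 ≤ A * B := by nlinarith
  calc C ≤ |C| := le_abs_self C
    _ = Real.sqrt (C ^ 2) := (Real.sqrt_sq_eq_abs C).symm
    _ ≤ Real.sqrt (A * B) := Real.sqrt_le_sqrt hCsq
    _ = Real.sqrt A * Real.sqrt B := Real.sqrt_mul hAnn B
    _ = L2n ⇑f * L2n ⇑g := rfl

end AMDI

namespace AMDI

/-- Log-convexity along the antidiagonal via double integration by parts. -/
lemma conv_step (h : S2) (i k : ℕ) :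
    L2n ⇑(Pv^[i + 1] (Px^[k + 1] h)) ^ 2 ≤
      L2n ⇑(Pv^[i] (Px^[k + 2] h)) * L2n ⇑(Pv^[i + 2] (Px^[k] h)) := by
  set w : S2 := Pv^[i] (Px^[k + 1] h) with hw
  have hu : Pv^[i + 1] (Px^[k + 1] h) = Pv w := by
    rw [hw, ← Function.iterate_succ_apply' Pv]
  have step1 : (∫ p : ℝ × ℝ, (Pv w p) * (Pv w p)) =
      -∫ p : ℝ × ℝ, w p * (Pv (Pv w)) p := ibp_v w (Pv w)
  -- second factor: Pv (Pv w) = Pv^[i+2] (Px^[k+1] h) = Px (Pv^[i+2] (Px^[k] h))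
  have hfact : Pv (Pv w) = Px (Pv^[i + 2] (Px^[k] h)) := by
    rw [hw, ← Function.iterate_succ_apply' Pv, ← Function.iterate_succ_apply' Pv]
    rw [comm_PxPv_iter (i + 2) (Px^[k] h), ← Function.iterate_succ_apply' Px]
  have step2 : (∫ p : ℝ × ℝ, w p * (Px (Pv^[i + 2] (Px^[k] h))) p) =
      -∫ p : ℝ × ℝ, (Px w) p * (Pv^[i + 2] (Px^[k] h)) p := by
    have := ibp_x w (Pv^[i + 2] (Px^[k] h))
    linarith [this]
  have hPxw : Px w = Pv^[i] (Px^[k + 2] h) := by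
    rw [hw, comm_PxPv_iter i (Px^[k + 1] h), ← Function.iterate_succ_apply' Px]
  have key : (∫ p : ℝ × ℝ, (Pv w p) * (Pv w p)) =
      ∫ p : ℝ × ℝ, (Pv^[i] (Px^[k + 2] h)) p * (Pv^[i + 2] (Px^[k] h)) p := by
    rw [step1, hfact, step2, neg_neg, hPxw]
  have hcs := cauchy_schwarz (Pv^[i] (Px^[k + 2] h)) (Pv^[i + 2] (Px^[k] h))
  have hsq : L2n ⇑(Pv^[i + 1] (Px^[k + 1] h)) ^ 2 =
      ∫ p : ℝ × ℝ, (Pv w p) * (Pv w p) := by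
    rw [hu, L2n_sq (Pv w)]
    congr 1
    funext p
    ring
  rw [hsq, key]
  exact hcs

/-- Abstract sequence lemma: head interpolation for log-convex sequences. -/
lemma seq_lemma (d : ℕ → ℝ) (m : ℕ) (hm : 1 ≤ m) (h0 : ∀ i, 0 ≤ d i)
    (hc : ∀ i, 1 ≤ i → i < m → d i ^ 2 ≤ d (i - 1) * d (i + 1)) :
    d 1 ≤ d 0 + d m := by
  have Q : ∀ k, k + 1 ≤ m → d 1 * d k ≤ d 0 * d (k + 1) := by
    intro k
    induction k with
    | zero => intro _; rw [mul_comm]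
    | succ k ih =>
      intro hk1
      have hck := hc (k + 1) (by omega) (by omega)
      simp only [Nat.add_sub_cancel] at hck
      rcases eq_or_lt_of_le (h0 (k + 1)) with hz | hpos
      · rw [← hz]
        have := mul_nonneg (h0 0) (h0 (k + 2))
        simpa using this
      · have hq := ih (by omega)
        have hmul : d 1 * d (k + 1) * d (k + 1) ≤ d 0 * d (k + 2) * d (k + 1) := by
          nlinarith [h0 1, h0 k, h0 (k + 2), h0 0]
        exact le_of_mul_le_mul_right hmul hpos
  have R : ∀ k, k + 1 ≤ m → d 1 ^ (k + 1) ≤ d 0 ^ k * d (k + 1) := by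
    intro k
    induction k with
    | zero => intro _; simp
    | succ k ih =>
      intro hk1
      have hr := ih (by omega)
      have hq := Q (k + 1) hk1
      calc d 1 ^ (k + 2) = d 1 ^ (k + 1) * d 1 := by ring
        _ ≤ (d 0 ^ k * d (k + 1)) * d 1 := by
            exact mul_le_mul_of_nonneg_right hr (h0 1)
        _ = d 0 ^ k * (d 1 * d (k + 1)) := by ring
        _ ≤ d 0 ^ k * (d 0 * d (k + 2)) := by
            exact mul_le_mul_of_nonneg_left hq (pow_nonneg (h0 0) k)
        _ = d 0 ^ (k + 1) * d (k + 2) := by ring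
  obtain ⟨n, rfl⟩ : ∃ n, m = n + 1 := ⟨m - 1, by omega⟩
  have hR := R n le_rfl
  have hs : d 0 ^ n * d (n + 1) ≤ (d 0 + d (n + 1)) ^ (n + 1) := by
    calc d 0 ^ n * d (n + 1) ≤ (d 0 + d (n + 1)) ^ n * (d 0 + d (n + 1)) := by
          apply mul_le_mul
          · exact pow_le_pow_left₀ (h0 0) (le_add_of_nonneg_right (h0 (n + 1))) n
          · exact le_add_of_nonneg_left (h0 0)
          · exact h0 (n + 1)
          · exact pow_nonneg (add_nonneg (h0 0) (h0 (n + 1))) n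
      _ = (d 0 + d (n + 1)) ^ (n + 1) := by ring
  have : d 1 ^ (n + 1) ≤ (d 0 + d (n + 1)) ^ (n + 1) := le_trans hR hs
  exact le_of_pow_le_pow_left₀ (Nat.succ_ne_zero n) (add_nonneg (h0 0) (h0 (n + 1))) this

end AMDI

namespace AMDI

lemma key_ineq (h : S2) (n : ℕ) :
    L2n ⇑(Pv (Px^[n] h)) ≤ L2n ⇑(Px^[n + 1] h) + L2n ⇑(Pv^[n + 1] h) := by
  have main := seq_lemma (fun i => L2n ⇑(Pv^[i] (Px^[n + 1 - i] h))) (n + 1) (by omega)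
    (fun i => L2n_nonneg _) ?_
  · simp only [Nat.add_sub_cancel, Nat.sub_self, Function.iterate_one, Function.iterate_zero,
      id_eq, Nat.zero_add] at main
    simpa using main
  · intro i hi1 hi2
    obtain ⟨j, rfl⟩ : ∃ j, i = j + 1 := ⟨i - 1, by omega⟩
    have e1 : n + 1 - (j + 1) = (n - (j + 1)) + 1 := by omega
    have e2 : n + 1 - j = (n - (j + 1)) + 2 := by omega
    have e3 : n + 1 - (j + 1 + 1) = n - (j + 1) := by omega
    simp only [Nat.add_sub_cancel]
    rw [e1, e2, e3]
    exact conv_step h j (n - (j + 1))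

lemma key_ineq' (h : S2) (n : ℕ) :
    L2n (pdv1 (pdx1^[n] ⇑h)) ≤ L2n (pdx1^[n + 1] ⇑h) + L2n (pdv1^[n + 1] ⇑h) := by
  rw [iter_Px n h, iter_Px (n + 1) h, iter_Pv (n + 1) h, ← coe_Pv]
  exact key_ineq h n

end AMDI

/-- Analytic-norm interpolation for mixed derivatives:
`Σ (λⁿ/n!) ‖∂_v ∂_x^n h‖_{L²} ≤ Σ (λⁿ/n!) ‖∂_x^{n+1} h‖_{L²} + Σ (λⁿ/n!) ‖∂_v^{n+1} h‖_{L²}`. -/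
theorem analytic_mixed_derivative_interpolation (h : SchwartzMap (ℝ × ℝ) ℝ)
    (lam : ℝ) (hlam : 0 < lam)
    (hsum : Summable (fun n : ℕ => lam ^ n / (n.factorial : ℝ) *
      (L2n (pdx1^[n + 1] ⇑h) + L2n (pdv1^[n + 1] ⇑h)))) :
    (∑' n : ℕ, lam ^ n / (n.factorial : ℝ) * L2n (pdv1 (pdx1^[n] ⇑h)))
      ≤ (∑' n : ℕ, lam ^ n / (n.factorial : ℝ) * L2n (pdx1^[n + 1] ⇑h))
        + ∑' n : ℕ, lam ^ n / (n.factorial : ℝ) * L2n (pdv1^[n + 1] ⇑h) := by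
  have hcnn : ∀ n : ℕ, (0 : ℝ) ≤ lam ^ n / (n.factorial : ℝ) := fun n => by positivity
  have hterm : ∀ n : ℕ, lam ^ n / (n.factorial : ℝ) * L2n (pdv1 (pdx1^[n] ⇑h)) ≤
      lam ^ n / (n.factorial : ℝ) * (L2n (pdx1^[n + 1] ⇑h) + L2n (pdv1^[n + 1] ⇑h)) :=
    fun n => mul_le_mul_of_nonneg_left (AMDI.key_ineq' h n) (hcnn n)
  have hsumL : Summable (fun n : ℕ =>
      lam ^ n / (n.factorial : ℝ) * L2n (pdv1 (pdx1^[n] ⇑h))) := by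
    apply Summable.of_nonneg_of_le (fun n => mul_nonneg (hcnn n) (AMDI.L2n_nonneg _))
      hterm hsum
  have hsumA : Summable (fun n : ℕ => lam ^ n / (n.factorial : ℝ) * L2n (pdx1^[n + 1] ⇑h)) := by
    apply Summable.of_nonneg_of_le (fun n => mul_nonneg (hcnn n) (AMDI.L2n_nonneg _))
      (fun n => ?_) hsum
    have := AMDI.L2n_nonneg (pdv1^[n + 1] ⇑h)
    have := hcnn n
    nlinarith [AMDI.L2n_nonneg (pdx1^[n + 1] ⇑h)]
  have hsumB : Summable (fun n : ℕ => lam ^ n / (n.factorial : ℝ) * L2n (pdv1^[n + 1] ⇑h)) := by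
    apply Summable.of_nonneg_of_le (fun n => mul_nonneg (hcnn n) (AMDI.L2n_nonneg _))
      (fun n => ?_) hsum
    have := AMDI.L2n_nonneg (pdv1^[n + 1] ⇑h)
    have := hcnn n
    nlinarith [AMDI.L2n_nonneg (pdx1^[n + 1] ⇑h)]
  calc (∑' n : ℕ, lam ^ n / (n.factorial : ℝ) * L2n (pdv1 (pdx1^[n] ⇑h)))
      ≤ ∑' n : ℕ, lam ^ n / (n.factorial : ℝ) *
          (L2n (pdx1^[n + 1] ⇑h) + L2n (pdv1^[n + 1] ⇑h)) :=
        Summable.tsum_le_tsum hterm hsumL hsum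
    _ = (∑' n : ℕ, lam ^ n / (n.factorial : ℝ) * L2n (pdx1^[n + 1] ⇑h))
        + ∑' n : ℕ, lam ^ n / (n.factorial : ℝ) * L2n (pdv1^[n + 1] ⇑h) := by
        rw [← Summable.tsum_add hsumA hsumB]
        congr 1
        funext n
        ring
end

section
/- For Schwartz h : ℝ × ℝ → ℝ and λ > 0, the mixed L²_x L^∞_v analytic norm is controlled: Σ_n (λⁿ/n!) ‖∂_v^n h‖_{L²_x L^∞_v} ≤ C ( Σ_n (λⁿ/n!) ‖∂_v^n h‖_{L²_{x,v}} )^{1/2} ( Σ_n (λⁿ/n!) ‖∂_v^{n+1} h‖_{L²_{x,v}} )^{1/2}. -/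
open MeasureTheory Real SchwartzMap

/-- The mixed `L²_x L^∞_v` norm. -/
noncomputable def L2xLinf (g : ℝ × ℝ → ℝ) : ℝ :=
  Real.sqrt (∫ x : ℝ, (⨆ v : ℝ, |g (x, v)|) ^ 2)

open LineDeriv in
/-- Partial derivative on Schwartz space (port helper). -/
noncomputable def pderivCLM (_ : Type) (m : ℝ × ℝ) : 𝓢(ℝ × ℝ, ℝ) →L[ℝ] 𝓢(ℝ × ℝ, ℝ) :=
  lineDerivOpCLM ℝ 𝓢(ℝ × ℝ, ℝ) m

lemma pderivCLM_apply (K : Type) (m : ℝ × ℝ) (f : 𝓢(ℝ × ℝ, ℝ)) (x : ℝ × ℝ) :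
    pderivCLM K m f x = fderiv ℝ f x m := rfl

namespace AgmonAux

/-- Uniform bound for a Schwartz function. -/
lemma bdd (f : SchwartzMap (ℝ × ℝ) ℝ) : ∃ C : ℝ, 0 ≤ C ∧ ∀ p : ℝ × ℝ, ‖f p‖ ≤ C := by
  refine ⟨SchwartzMap.seminorm ℝ 0 0 f, apply_nonneg _ _, fun p => ?_⟩
  exact f.norm_le_seminorm ℝ p

/-- Decay of a Schwartz function in the second variable, uniformly in the first. -/
lemma slice_bound (f : SchwartzMap (ℝ × ℝ) ℝ) :
    ∃ C : ℝ, 0 ≤ C ∧ ∀ x v : ℝ, |f (x, v)| ≤ C / (1 + v ^ 2) := by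
  obtain ⟨C₀, hC₀pos, hC₀⟩ := f.decay 0 0
  obtain ⟨C₂, hC₂pos, hC₂⟩ := f.decay 2 0
  refine ⟨C₀ + C₂, by positivity, fun x v => ?_⟩
  have h0 : ‖f (x, v)‖ ≤ C₀ := by simpa using hC₀ (x, v)
  have h2 : ‖((x, v) : ℝ × ℝ)‖ ^ 2 * ‖f (x, v)‖ ≤ C₂ := by simpa using hC₂ (x, v)
  have hv : |v| ≤ ‖((x, v) : ℝ × ℝ)‖ := by
    simpa using norm_snd_le ((x, v) : ℝ × ℝ)
  have hv2 : v ^ 2 * ‖f (x, v)‖ ≤ C₂ := by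
    refine le_trans ?_ h2
    have : v ^ 2 ≤ ‖((x, v) : ℝ × ℝ)‖ ^ 2 := by
      calc v ^ 2 = |v| ^ 2 := (sq_abs v).symm
        _ ≤ ‖((x, v) : ℝ × ℝ)‖ ^ 2 := by gcongr
    exact mul_le_mul_of_nonneg_right this (norm_nonneg _)
  have hpos : (0 : ℝ) < 1 + v ^ 2 := by positivity
  rw [le_div_iff₀ hpos]
  have : |f (x, v)| * (1 + v ^ 2) = ‖f (x, v)‖ + v ^ 2 * ‖f (x, v)‖ := by
    rw [Real.norm_eq_abs]; ring
  rw [this]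
  exact add_le_add h0 hv2

/-- Product of two Schwartz functions is integrable. -/
lemma mul_integrable (f g : SchwartzMap (ℝ × ℝ) ℝ) :
    Integrable (fun p : ℝ × ℝ => f p * g p) (volume : Measure (ℝ × ℝ)) := by
  obtain ⟨C, hC0, hC⟩ := bdd f
  have := (g.integrable (μ := (volume : Measure (ℝ × ℝ)))).bdd_mul
    f.continuous.aestronglyMeasurable (Filter.Eventually.of_forall hC)
  exact this

/-- Slice integrability of a product of Schwartz functions. -/
lemma slice_mul_integrable (f g : SchwartzMap (ℝ × ℝ) ℝ) (x : ℝ) :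
    Integrable (fun v : ℝ => f (x, v) * g (x, v)) (volume : Measure ℝ) := by
  obtain ⟨C, hC0, hC⟩ := slice_bound f
  obtain ⟨D, hD0, hD⟩ := bdd g
  have hint : Integrable (fun v : ℝ => C * D * (1 / (1 + v ^ 2))) (volume : Measure ℝ) := by
    simpa [one_div] using integrable_inv_one_add_sq.const_mul (C * D)
  refine Integrable.mono' hint ?_ (Filter.Eventually.of_forall fun v => ?_)
  · exact (Continuous.mul (f.continuous.comp (by continuity))
      (g.continuous.comp (by continuity))).aestronglyMeasurable
  · have h1 : |f (x, v) * g (x, v)| ≤ (C / (1 + v ^ 2)) * D := by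
      rw [abs_mul]
      exact mul_le_mul (hC x v) (hD (x, v)) (abs_nonneg _) (by positivity)
    calc ‖f (x, v) * g (x, v)‖ = |f (x, v) * g (x, v)| := rfl
      _ ≤ (C / (1 + v ^ 2)) * D := h1
      _ = C * D * (1 / (1 + v ^ 2)) := by ring

/-- 1D Agmon inequality on each slice. -/
lemma slice_agmon (f : SchwartzMap (ℝ × ℝ) ℝ) (x : ℝ) :
    (⨆ v : ℝ, |f (x, v)|) ^ 2
      ≤ 2 * ∫ v : ℝ, |f (x, v) * (pderivCLM ℝ ((0 : ℝ), (1 : ℝ)) f) (x, v)| := by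
  set g := pderivCLM ℝ ((0 : ℝ), (1 : ℝ)) f with hg
  set A := ∫ v : ℝ, |f (x, v) * g (x, v)| with hA
  have hA0 : 0 ≤ A := integral_nonneg fun v => abs_nonneg _
  have hderiv : ∀ v₀ : ℝ, HasDerivAt (fun v => f (x, v)) (g (x, v₀)) v₀ := by
    intro v₀
    have h1 : HasDerivAt (fun v : ℝ => ((x, v) : ℝ × ℝ)) ((0 : ℝ), (1 : ℝ)) v₀ :=
      (hasDerivAt_const v₀ x).prodMk (hasDerivAt_id v₀)
    have h2 := (f.differentiableAt.hasFDerivAt).comp_hasDerivAt v₀ h1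
    exact h2
  have hF : ∀ v₀ : ℝ, HasDerivAt (fun v => (f (x, v)) ^ 2) (2 * f (x, v₀) * g (x, v₀)) v₀ := by
    intro v₀
    have h := (hderiv v₀).fun_pow 2
    refine h.congr_deriv ?_
    push_cast
    ring
  have hint : Integrable (fun v : ℝ => 2 * f (x, v) * g (x, v)) (volume : Measure ℝ) := by
    have := (slice_mul_integrable f g x).const_mul 2
    simpa [mul_assoc] using this
  have habs : Integrable (fun v : ℝ => |2 * f (x, v) * g (x, v)|) (volume : Measure ℝ) := hint.abs
  have htendf : Filter.Tendsto (fun v : ℝ => f (x, v)) Filter.atTop (nhds 0) := by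
    obtain ⟨C, hC0, hC⟩ := slice_bound f
    have hbig : Filter.Tendsto (fun v : ℝ => 1 + v ^ 2) Filter.atTop Filter.atTop :=
      Filter.tendsto_atTop_add_const_left _ 1 (Filter.tendsto_pow_atTop two_ne_zero)
    have hz : Filter.Tendsto (fun v : ℝ => C / (1 + v ^ 2)) Filter.atTop (nhds 0) :=
      Filter.Tendsto.div_atTop tendsto_const_nhds hbig
    exact squeeze_zero_norm (fun v => hC x v) hz
  have htend : Filter.Tendsto (fun v : ℝ => (f (x, v)) ^ 2) Filter.atTop (nhds 0) := by
    have := htendf.pow 2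
    simpa using this
  -- pointwise bound via FTC
  have key : ∀ v₀ : ℝ, (f (x, v₀)) ^ 2 ≤ 2 * A := by
    intro v₀
    have hftc : ∫ v in Set.Ioi v₀, 2 * f (x, v) * g (x, v) = 0 - (f (x, v₀)) ^ 2 :=
      integral_Ioi_of_hasDerivAt_of_tendsto
        ((hF v₀).continuousAt).continuousWithinAt
        (fun v _ => hF v) hint.integrableOn htend
    have h1 : (f (x, v₀)) ^ 2 = -(∫ v in Set.Ioi v₀, 2 * f (x, v) * g (x, v)) := by
      rw [hftc]; ring
    calc (f (x, v₀)) ^ 2 = -(∫ v in Set.Ioi v₀, 2 * f (x, v) * g (x, v)) := h1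
      _ ≤ |∫ v in Set.Ioi v₀, 2 * f (x, v) * g (x, v)| := neg_le_abs _
      _ ≤ ∫ v in Set.Ioi v₀, |2 * f (x, v) * g (x, v)| := by
          have := norm_integral_le_integral_norm (μ := volume.restrict (Set.Ioi v₀))
              (fun v => 2 * f (x, v) * g (x, v))
          simpa only [Real.norm_eq_abs] using this
      _ ≤ ∫ v : ℝ, |2 * f (x, v) * g (x, v)| :=
          setIntegral_le_integral habs (Filter.Eventually.of_forall fun v => abs_nonneg _)
      _ = 2 * A := by
          rw [hA, ← integral_const_mul]
          congr 1 with v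
          rw [mul_assoc, abs_mul]
          simp
  have hsupA : (⨆ v : ℝ, |f (x, v)|) ≤ Real.sqrt (2 * A) := by
    refine Real.iSup_le (fun v₀ => ?_) (Real.sqrt_nonneg _)
    have := Real.sqrt_le_sqrt (key v₀)
    rwa [Real.sqrt_sq_eq_abs] at this
  have hsup0 : 0 ≤ ⨆ v : ℝ, |f (x, v)| := Real.iSup_nonneg fun v => abs_nonneg _
  calc (⨆ v : ℝ, |f (x, v)|) ^ 2 ≤ Real.sqrt (2 * A) ^ 2 := by
        exact pow_le_pow_left₀ hsup0 hsupA 2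
    _ = 2 * A := Real.sq_sqrt (by positivity)

/-- Hölder (Cauchy–Schwarz) for two Schwartz functions on `ℝ × ℝ`. -/
lemma integral_abs_mul_le (f g : SchwartzMap (ℝ × ℝ) ℝ) :
    ∫ p : ℝ × ℝ, |f p * g p| ≤ L2n ⇑f * L2n ⇑g := by
  have hpq : Real.HolderConjugate 2 2 := Real.holderConjugate_iff.mpr ⟨one_lt_two, by norm_num⟩
  have h2 : ENNReal.ofReal (2 : ℝ) = 2 := by
    rw [ENNReal.ofReal_ofNat]
  have memf : MemLp (fun p : ℝ × ℝ => |f p|) (ENNReal.ofReal (2 : ℝ)) volume := by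
    rw [h2]
    refine (memLp_two_iff_integrable_sq f.continuous.abs.aestronglyMeasurable).mpr ?_
    have := mul_integrable f f
    refine this.congr' ?_ (Filter.Eventually.of_forall fun p => ?_)
    · exact (f.continuous.abs.pow 2).aestronglyMeasurable
    · simp [sq_abs, sq]
  have memg : MemLp (fun p : ℝ × ℝ => |g p|) (ENNReal.ofReal (2 : ℝ)) volume := by
    rw [h2]
    refine (memLp_two_iff_integrable_sq g.continuous.abs.aestronglyMeasurable).mpr ?_
    have := mul_integrable g g
    refine this.congr' ?_ (Filter.Eventually.of_forall fun p => ?_)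
    · exact (g.continuous.abs.pow 2).aestronglyMeasurable
    · simp [sq_abs, sq]
  have H := integral_mul_le_Lp_mul_Lq_of_nonneg hpq
    (Filter.Eventually.of_forall fun p : ℝ × ℝ => abs_nonneg (f p))
    (Filter.Eventually.of_forall fun p : ℝ × ℝ => abs_nonneg (g p)) memf memg
  have e1 : ∫ p : ℝ × ℝ, |f p * g p| = ∫ p : ℝ × ℝ, |f p| * |g p| := by
    congr 1 with p; exact abs_mul _ _
  have e2 : ∀ (h : SchwartzMap (ℝ × ℝ) ℝ),
      (∫ p : ℝ × ℝ, |h p| ^ (2 : ℝ)) ^ ((1 : ℝ) / 2) = L2n ⇑h := by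
    intro h
    have : ∫ p : ℝ × ℝ, |h p| ^ (2 : ℝ) = ∫ p : ℝ × ℝ, (h p) ^ 2 := by
      congr 1 with p
      rw [show ((2 : ℝ) : ℝ) = ((2 : ℕ) : ℝ) by norm_num, Real.rpow_natCast, sq_abs]
    rw [this, L2n, Real.sqrt_eq_rpow]
  rw [e1]
  calc ∫ p : ℝ × ℝ, |f p| * |g p|
      ≤ (∫ p : ℝ × ℝ, |f p| ^ (2 : ℝ)) ^ ((1 : ℝ) / 2)
        * (∫ p : ℝ × ℝ, |g p| ^ (2 : ℝ)) ^ ((1 : ℝ) / 2) := H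
    _ = L2n ⇑f * L2n ⇑g := by rw [e2 f, e2 g]

/-- The Agmon inequality for a single Schwartz function. -/
lemma agmon (f : SchwartzMap (ℝ × ℝ) ℝ) :
    L2xLinf ⇑f ≤ Real.sqrt 2 * Real.sqrt (L2n ⇑f)
      * Real.sqrt (L2n ⇑(pderivCLM ℝ ((0 : ℝ), (1 : ℝ)) f)) := by
  set g := pderivCLM ℝ ((0 : ℝ), (1 : ℝ)) f with hg
  have hprod : Integrable (fun p : ℝ × ℝ => |f p * g p|) (volume : Measure (ℝ × ℝ)) :=
    (mul_integrable f g).abs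
  have hprod' : Integrable (fun p : ℝ × ℝ => |f p * g p|)
      ((volume : Measure ℝ).prod (volume : Measure ℝ)) := by
    rwa [← MeasureTheory.Measure.volume_eq_prod]
  have hAint : Integrable (fun x : ℝ => ∫ v : ℝ, |f (x, v) * g (x, v)|) (volume : Measure ℝ) :=
    hprod'.integral_prod_left
  have hfub : ∫ x : ℝ, ∫ v : ℝ, |f (x, v) * g (x, v)| = ∫ p : ℝ × ℝ, |f p * g p| := by
    rw [MeasureTheory.Measure.volume_eq_prod, ← MeasureTheory.integral_prod _ hprod']
  have step1 : ∫ x : ℝ, (⨆ v : ℝ, |f (x, v)|) ^ 2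
      ≤ 2 * (L2n ⇑f * L2n ⇑g) := by
    calc ∫ x : ℝ, (⨆ v : ℝ, |f (x, v)|) ^ 2
        ≤ ∫ x : ℝ, 2 * ∫ v : ℝ, |f (x, v) * g (x, v)| := by
          refine integral_mono_of_nonneg
            (Filter.Eventually.of_forall fun x => sq_nonneg _)
            (hAint.const_mul 2)
            (Filter.Eventually.of_forall fun x => slice_agmon f x)
      _ = 2 * ∫ x : ℝ, ∫ v : ℝ, |f (x, v) * g (x, v)| := integral_const_mul 2 _
      _ = 2 * ∫ p : ℝ × ℝ, |f p * g p| := by rw [hfub]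
      _ ≤ 2 * (L2n ⇑f * L2n ⇑g) := by
          have := integral_abs_mul_le f g
          linarith
  have hL2f : 0 ≤ L2n ⇑f := Real.sqrt_nonneg _
  have hL2g : 0 ≤ L2n ⇑g := Real.sqrt_nonneg _
  calc L2xLinf ⇑f = Real.sqrt (∫ x : ℝ, (⨆ v : ℝ, |f (x, v)|) ^ 2) := rfl
    _ ≤ Real.sqrt (2 * (L2n ⇑f * L2n ⇑g)) := Real.sqrt_le_sqrt step1
    _ = Real.sqrt 2 * Real.sqrt (L2n ⇑f) * Real.sqrt (L2n ⇑g) := by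
        rw [Real.sqrt_mul (by norm_num), Real.sqrt_mul hL2f, mul_assoc]

end AgmonAux

/-- Iterates of `pdv1` on a Schwartz function agree with iterates of `pderivCLM`. -/
lemma AgmonAux.iter_eq (h : SchwartzMap (ℝ × ℝ) ℝ) (n : ℕ) :
    pdv1^[n] ⇑h = ⇑((fun u : SchwartzMap (ℝ × ℝ) ℝ => pderivCLM ℝ ((0 : ℝ), (1 : ℝ)) u)^[n] h) := by
  induction n with
  | zero => rfl
  | succ n ih =>
    rw [Function.iterate_succ_apply', Function.iterate_succ_apply', ih]
    funext p
    simp only [pdv1, pderivCLM_apply]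

/-- Analytic Agmon-type inequality: the `L²_x L^∞_v` analytic norm is controlled by the
geometric mean of the `L²` analytic norms of `h` and `∂_v h`. -/
theorem analytic_agmon_inequality :
    ∃ C > 0, ∀ (h : SchwartzMap (ℝ × ℝ) ℝ) (lam : ℝ), 0 < lam →
      Summable (fun n : ℕ => lam ^ n / (n.factorial : ℝ) * L2n (pdv1^[n] ⇑h)) →
      Summable (fun n : ℕ => lam ^ n / (n.factorial : ℝ) * L2n (pdv1^[n + 1] ⇑h)) →
      (∑' n : ℕ, lam ^ n / (n.factorial : ℝ) * L2xLinf (pdv1^[n] ⇑h))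
        ≤ C * (∑' n : ℕ, lam ^ n / (n.factorial : ℝ) * L2n (pdv1^[n] ⇑h)) ^ ((1 : ℝ) / 2)
            * (∑' n : ℕ, lam ^ n / (n.factorial : ℝ) * L2n (pdv1^[n + 1] ⇑h)) ^ ((1 : ℝ) / 2) := by
  refine ⟨Real.sqrt 2, Real.sqrt_pos.mpr two_pos, fun h lam hlam hS hT => ?_⟩
  have ha : ∀ n : ℕ, 0 ≤ lam ^ n / (n.factorial : ℝ) := fun n => by positivity
  have hb : ∀ n : ℕ, 0 ≤ L2n (pdv1^[n] ⇑h) := fun n => Real.sqrt_nonneg _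
  have hc : ∀ n : ℕ, 0 ≤ L2n (pdv1^[n + 1] ⇑h) := fun n => Real.sqrt_nonneg _
  set S := ∑' n : ℕ, lam ^ n / (n.factorial : ℝ) * L2n (pdv1^[n] ⇑h) with hSdef
  set T := ∑' n : ℕ, lam ^ n / (n.factorial : ℝ) * L2n (pdv1^[n + 1] ⇑h) with hTdef
  have hS0 : 0 ≤ S := tsum_nonneg fun n => mul_nonneg (ha n) (hb n)
  have hT0 : 0 ≤ T := tsum_nonneg fun n => mul_nonneg (ha n) (hc n)
  -- pointwise term bound
  have hterm : ∀ n : ℕ, lam ^ n / (n.factorial : ℝ) * L2xLinf (pdv1^[n] ⇑h)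
      ≤ Real.sqrt 2 * (Real.sqrt (lam ^ n / (n.factorial : ℝ) * L2n (pdv1^[n] ⇑h))
        * Real.sqrt (lam ^ n / (n.factorial : ℝ) * L2n (pdv1^[n + 1] ⇑h))) := by
    intro n
    have hiter := AgmonAux.iter_eq h n
    have hiter' : pdv1^[n + 1] ⇑h
        = ⇑(pderivCLM ℝ ((0 : ℝ), (1 : ℝ))
            ((fun u : SchwartzMap (ℝ × ℝ) ℝ => pderivCLM ℝ ((0 : ℝ), (1 : ℝ)) u)^[n] h)) := by
      rw [AgmonAux.iter_eq h (n + 1), Function.iterate_succ_apply']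
    have hag := AgmonAux.agmon
      ((fun u : SchwartzMap (ℝ × ℝ) ℝ => pderivCLM ℝ ((0 : ℝ), (1 : ℝ)) u)^[n] h)
    rw [← hiter, ← hiter'] at hag
    calc lam ^ n / (n.factorial : ℝ) * L2xLinf (pdv1^[n] ⇑h)
        ≤ lam ^ n / (n.factorial : ℝ) * (Real.sqrt 2 * Real.sqrt (L2n (pdv1^[n] ⇑h))
            * Real.sqrt (L2n (pdv1^[n + 1] ⇑h))) := mul_le_mul_of_nonneg_left hag (ha n)
      _ = Real.sqrt 2 * (Real.sqrt (lam ^ n / (n.factorial : ℝ) * L2n (pdv1^[n] ⇑h))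
            * Real.sqrt (lam ^ n / (n.factorial : ℝ) * L2n (pdv1^[n + 1] ⇑h))) := by
          rw [Real.sqrt_mul (ha n), Real.sqrt_mul (ha n),
            show Real.sqrt (lam ^ n / (n.factorial : ℝ)) * Real.sqrt (L2n (pdv1^[n] ⇑h))
                * (Real.sqrt (lam ^ n / (n.factorial : ℝ))
                  * Real.sqrt (L2n (pdv1^[n + 1] ⇑h)))
              = Real.sqrt (lam ^ n / (n.factorial : ℝ)) * Real.sqrt (lam ^ n / (n.factorial : ℝ))
                * (Real.sqrt (L2n (pdv1^[n] ⇑h)) * Real.sqrt (L2n (pdv1^[n + 1] ⇑h)))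
              from by ring,
            Real.mul_self_sqrt (ha n)]
          ring
  -- partial sums bound
  have key : ∀ s : Finset ℕ,
      ∑ n ∈ s, lam ^ n / (n.factorial : ℝ) * L2xLinf (pdv1^[n] ⇑h)
        ≤ Real.sqrt 2 * (Real.sqrt S * Real.sqrt T) := by
    intro s
    have h1 : ∑ n ∈ s, lam ^ n / (n.factorial : ℝ) * L2xLinf (pdv1^[n] ⇑h)
        ≤ ∑ n ∈ s, Real.sqrt 2 * (Real.sqrt (lam ^ n / (n.factorial : ℝ) * L2n (pdv1^[n] ⇑h))
            * Real.sqrt (lam ^ n / (n.factorial : ℝ) * L2n (pdv1^[n + 1] ⇑h))) :=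
      Finset.sum_le_sum fun n _ => hterm n
    have hCS : (∑ n ∈ s, Real.sqrt (lam ^ n / (n.factorial : ℝ) * L2n (pdv1^[n] ⇑h))
          * Real.sqrt (lam ^ n / (n.factorial : ℝ) * L2n (pdv1^[n + 1] ⇑h))) ^ 2
        ≤ (∑ n ∈ s, lam ^ n / (n.factorial : ℝ) * L2n (pdv1^[n] ⇑h))
          * ∑ n ∈ s, lam ^ n / (n.factorial : ℝ) * L2n (pdv1^[n + 1] ⇑h) := by
      refine Finset.sum_sq_le_sum_mul_sum_of_sq_eq_mul s
        (fun n _ => mul_nonneg (ha n) (hb n)) (fun n _ => mul_nonneg (ha n) (hc n))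
        (fun n _ => ?_)
      rw [mul_pow, Real.sq_sqrt (mul_nonneg (ha n) (hb n)),
        Real.sq_sqrt (mul_nonneg (ha n) (hc n))]
    have hsum_nonneg : 0 ≤ ∑ n ∈ s, Real.sqrt (lam ^ n / (n.factorial : ℝ) * L2n (pdv1^[n] ⇑h))
          * Real.sqrt (lam ^ n / (n.factorial : ℝ) * L2n (pdv1^[n + 1] ⇑h)) :=
      Finset.sum_nonneg fun n _ => mul_nonneg (Real.sqrt_nonneg _) (Real.sqrt_nonneg _)
    have hsb : ∑ n ∈ s, lam ^ n / (n.factorial : ℝ) * L2n (pdv1^[n] ⇑h) ≤ S :=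
      Summable.sum_le_tsum s (fun n _ => mul_nonneg (ha n) (hb n)) hS
    have hsc : ∑ n ∈ s, lam ^ n / (n.factorial : ℝ) * L2n (pdv1^[n + 1] ⇑h) ≤ T :=
      Summable.sum_le_tsum s (fun n _ => mul_nonneg (ha n) (hc n)) hT
    have h2 : ∑ n ∈ s, Real.sqrt (lam ^ n / (n.factorial : ℝ) * L2n (pdv1^[n] ⇑h))
          * Real.sqrt (lam ^ n / (n.factorial : ℝ) * L2n (pdv1^[n + 1] ⇑h))
        ≤ Real.sqrt S * Real.sqrt T := by
      have h3 : (∑ n ∈ s, Real.sqrt (lam ^ n / (n.factorial : ℝ) * L2n (pdv1^[n] ⇑h))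
            * Real.sqrt (lam ^ n / (n.factorial : ℝ) * L2n (pdv1^[n + 1] ⇑h))) ^ 2
          ≤ S * T := by
        refine hCS.trans ?_
        exact mul_le_mul hsb hsc
          (Finset.sum_nonneg fun n _ => mul_nonneg (ha n) (hc n)) hS0
      calc ∑ n ∈ s, Real.sqrt (lam ^ n / (n.factorial : ℝ) * L2n (pdv1^[n] ⇑h))
            * Real.sqrt (lam ^ n / (n.factorial : ℝ) * L2n (pdv1^[n + 1] ⇑h))
          = Real.sqrt ((∑ n ∈ s, Real.sqrt (lam ^ n / (n.factorial : ℝ) * L2n (pdv1^[n] ⇑h))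
            * Real.sqrt (lam ^ n / (n.factorial : ℝ) * L2n (pdv1^[n + 1] ⇑h))) ^ 2) :=
            (Real.sqrt_sq hsum_nonneg).symm
        _ ≤ Real.sqrt (S * T) := Real.sqrt_le_sqrt h3
        _ = Real.sqrt S * Real.sqrt T := Real.sqrt_mul hS0 _
    calc ∑ n ∈ s, lam ^ n / (n.factorial : ℝ) * L2xLinf (pdv1^[n] ⇑h)
        ≤ ∑ n ∈ s, Real.sqrt 2 * (Real.sqrt (lam ^ n / (n.factorial : ℝ) * L2n (pdv1^[n] ⇑h))
            * Real.sqrt (lam ^ n / (n.factorial : ℝ) * L2n (pdv1^[n + 1] ⇑h))) := h1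
      _ = Real.sqrt 2 * ∑ n ∈ s, Real.sqrt (lam ^ n / (n.factorial : ℝ) * L2n (pdv1^[n] ⇑h))
            * Real.sqrt (lam ^ n / (n.factorial : ℝ) * L2n (pdv1^[n + 1] ⇑h)) :=
          (Finset.mul_sum _ _ _).symm
      _ ≤ Real.sqrt 2 * (Real.sqrt S * Real.sqrt T) :=
          mul_le_mul_of_nonneg_left h2 (Real.sqrt_nonneg 2)
  have hsummable : Summable (fun n : ℕ => lam ^ n / (n.factorial : ℝ) * L2xLinf (pdv1^[n] ⇑h)) :=
    summable_of_sum_le (fun n => mul_nonneg (ha n) (Real.sqrt_nonneg _)) key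
  have hfinal := hsummable.tsum_le_of_sum_le key
  rw [Real.sqrt_eq_rpow S, Real.sqrt_eq_rpow T] at hfinal
  calc (∑' n : ℕ, lam ^ n / (n.factorial : ℝ) * L2xLinf (pdv1^[n] ⇑h))
      ≤ Real.sqrt 2 * (S ^ ((1 : ℝ) / 2) * T ^ ((1 : ℝ) / 2)) := hfinal
    _ = Real.sqrt 2 * S ^ ((1 : ℝ) / 2) * T ^ ((1 : ℝ) / 2) := by ring
end
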